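/- In the Pinkall–Thorbergsson construction, for z ∈ M_+^t, the shape operator A_0 with respect to the unit normal Q_0 z has eigenvalues cot t, 0, -tan t with multiplicities l-m-1, m, l-m-1, respectively. Consequently its trace (the mean curvature component along Q_0z) equals (l-m-1)(cot t - tan t) = 2(l-m-1) cot 2t. -/

import Mathlib

open Matrix Real

noncomputable section

/-- The matrix `Q₀ = diag(tan t · Id, -cot t · Id)` on `ℝ^l ⊕ ℝ^l`. -/
def ptQzero (l : ℕ) (t : ℝ) : Matrix (Fin l ⊕ Fin l) (Fin l ⊕ Fin l) ℝ :=
  Matrix.fromBlocks (Real.tan t • 1) 0 0 (-(Real.cot t • 1))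

/-- A matrix on `ℝ^l ⊕ ℝ^l` acting on the corresponding Euclidean space. -/
def matLin {l : ℕ} (A : Matrix (Fin l ⊕ Fin l) (Fin l ⊕ Fin l) ℝ) :
    EuclideanSpace ℝ (Fin l ⊕ Fin l) →ₗ[ℝ] EuclideanSpace ℝ (Fin l ⊕ Fin l) :=
  Matrix.toEuclideanLin A

/-- The tangent space `T_z M₊ᵗ`, i.e. the orthogonal complement of
`span{z, Q₀z, ..., Q_m z}` in `ℝ^{2l}`. -/
def ptTangent {l m : ℕ} (Q : Fin (m + 1) → Matrix (Fin l ⊕ Fin l) (Fin l ⊕ Fin l) ℝ)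
    (z : EuclideanSpace ℝ (Fin l ⊕ Fin l)) : Submodule ℝ (EuclideanSpace ℝ (Fin l ⊕ Fin l)) :=
  (Submodule.span ℝ (insert z (Set.range fun α => matLin (Q α) z)))ᗮ

/-- The shape operator `A X = -(Q X)ᵀ` (tangential projection) on the tangent space `T`. -/
def shapeOp {l : ℕ} (T : Submodule ℝ (EuclideanSpace ℝ (Fin l ⊕ Fin l)))
    (A : Matrix (Fin l ⊕ Fin l) (Fin l ⊕ Fin l) ℝ) : T →ₗ[ℝ] T :=
  -(((T.orthogonalProjectionOnto).toLinearMap).comp ((matLin A).comp T.subtype))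

/-!
Write `Q₀ = diag(a·Id, b·Id)` with `a = tan t`, `b = -cot t`, so that `a b = -1`, and
`P₀ = diag(Id, -Id)`. Every `P_α` with `α ≠ 0` anticommutes with `P₀`, hence
`P_α diag(a, b) = diag(b, a) P_α`; therefore `Q₀ P_α Q₀ = -P_α` and `Q₀` commutes with `P_α P_β`.
It follows that `z, Q₀z, P₁z, …, P_mz` are pairwise orthogonal and nonzero, so
`dim T = 2l - m - 2`.

Three families of eigenvectors of `A = -(Q₀ ·)ᵀ` give lower bounds for the multiplicities:
the `b`- and `a`-eigenspaces of `Q₀`, each of dimension `l`, cut by the `m + 1` conditions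
`⟂ z, P₁z, …, P_mz`, lie in `T` and consist of eigenvectors of `A` for `-b = cot t` and
`-a = -tan t`; the `m` independent vectors `P_β Q₀ z` lie in `T` and are sent by `Q₀` to the
normal vectors `-P_β z`, so they lie in `ker A`. The three bounds add up to `dim T` and
eigenspaces for distinct eigenvalues are independent, so the bounds are equalities, `T` is the
direct sum of the three eigenspaces, and the trace is the weighted sum of the eigenvalues.
-/

open Module

section InnerProduct

variable {𝕜 E : Type*} [RCLike 𝕜] [NormedAddCommGroup E] [InnerProductSpace 𝕜 E]

theorem Submodule.mem_orthogonal_span_iff {s : Set E} {x : E} :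
    x ∈ (Submodule.span 𝕜 s)ᗮ ↔ ∀ u ∈ s, inner 𝕜 u x = 0 := by
  rw [← Submodule.span_singleton_le_iff_mem, ← Submodule.isOrtho_iff_le,
    Submodule.isOrtho_comm, Submodule.isOrtho_span]
  simp

theorem linearIndependent_finCons_of_inner_eq_zero {n : ℕ} {x : E} {v : Fin n → E}
    (hv : LinearIndependent 𝕜 v) (hx : x ≠ 0) (h : ∀ i, inner 𝕜 x (v i) = 0) :
    LinearIndependent 𝕜 (Fin.cons x v : Fin (n + 1) → E) := by
  refine linearIndependent_finCons.2 ⟨hv, fun hmem => hx ?_⟩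
  have hperp : x ∈ (Submodule.span 𝕜 (Set.range v))ᗮ := by
    rw [Submodule.mem_orthogonal_span_iff]
    rintro _ ⟨i, rfl⟩
    rw [inner_eq_zero_symm]
    exact h i
  exact inner_self_eq_zero.1 (Submodule.inner_right_of_mem_orthogonal hmem hperp)

end InnerProduct

namespace Module.End

variable {K V : Type*} [Field K] [AddCommGroup V] [Module K V] [FiniteDimensional K V]

theorem card_le_finrank_eigenspace {ι : Type*} [Fintype ι] {f : End K V} {μ : K} {v : ι → V}
    (hv : LinearIndependent K v) (h : ∀ i, f (v i) = μ • v i) :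
    Fintype.card ι ≤ finrank K (f.eigenspace μ) := by
  let w : ι → f.eigenspace μ := fun i => ⟨v i, mem_eigenspace_iff.2 (h i)⟩
  exact (LinearIndependent.of_comp (f.eigenspace μ).subtype hv (v := w)).fintype_card_le_finrank

theorem finrank_le_finrank_eigenspace {T W : Submodule K V} (f : End K T) {μ : K}
    (hWT : W ≤ T) (h : ∀ x : T, (x : V) ∈ W → f x = μ • x) :
    finrank K W ≤ finrank K (f.eigenspace μ) := by
  rw [← (Submodule.comapSubtypeEquivOfLe hWT).finrank_eq]
  exact Submodule.finrank_mono fun x hx => mem_eigenspace_iff.2 (h x hx)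

theorem sum_finrank_eigenspace_le {ι : Type*} [Fintype ι] [DecidableEq ι] (f : End K V)
    {μ : ι → K} (hμ : Function.Injective μ) :
    ∑ i, finrank K (f.eigenspace (μ i)) ≤ finrank K V := by
  have hind : iSupIndep fun i => f.eigenspace (μ i) := f.eigenspaces_iSupIndep.comp hμ
  rw [← Module.finrank_directSum]
  exact LinearMap.finrank_le_finrank_of_injective hind.dfinsupp_lsum_injective

theorem isInternal_eigenspace_of_finrank_le {ι : Type*} [Fintype ι] [DecidableEq ι]
    (f : End K V) {μ : ι → K} (hμ : Function.Injective μ)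
    (h : finrank K V ≤ ∑ i, finrank K (f.eigenspace (μ i))) :
    DirectSum.IsInternal fun i => f.eigenspace (μ i) := by
  have hind : iSupIndep fun i => f.eigenspace (μ i) := f.eigenspaces_iSupIndep.comp hμ
  have hinj : Function.Injective (DirectSum.coeLinearMap fun i => f.eigenspace (μ i)) :=
    hind.dfinsupp_lsum_injective
  refine ⟨hinj, (LinearMap.injective_iff_surjective_of_finrank_eq_finrank ?_).1 hinj⟩
  rw [Module.finrank_directSum]
  exact le_antisymm (sum_finrank_eigenspace_le f hμ) h

theorem trace_eq_sum_of_isInternal_eigenspace {ι : Type*} [Fintype ι] [DecidableEq ι]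
    (f : End K V) {μ : ι → K} (h : DirectSum.IsInternal fun i => f.eigenspace (μ i)) :
    LinearMap.trace K V f = ∑ i, μ i * finrank K (f.eigenspace (μ i)) := by
  rw [LinearMap.trace_eq_sum_trace_restrict h fun i =>
    f.mem_invtSubmodule_iff_forall_mem_of_mem.mp (eigenspace_mem_invtSubmodule f (μ i))]
  refine Finset.sum_congr rfl fun i _ => ?_
  rw [restrict_eigenspace, map_smul, LinearMap.trace_id, smul_eq_mul]

theorem finrank_eigenspace_eq_and_trace_eq {ι : Type*} [Fintype ι] [DecidableEq ι]
    (f : End K V) {μ : ι → K} (hμ : Function.Injective μ) {n : ι → ℕ}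
    (hn : ∀ i, n i ≤ finrank K (f.eigenspace (μ i))) (hV : finrank K V ≤ ∑ i, n i) :
    (∀ i, finrank K (f.eigenspace (μ i)) = n i) ∧ LinearMap.trace K V f = ∑ i, μ i * n i := by
  have hsum : ∑ i, n i = ∑ i, finrank K (f.eigenspace (μ i)) :=
    le_antisymm (Finset.sum_le_sum fun i _ => hn i) (hV.trans' (sum_finrank_eigenspace_le f hμ))
  have heq (i : ι) : finrank K (f.eigenspace (μ i)) = n i :=
    ((Finset.sum_eq_sum_iff_of_le fun i _ => hn i).1 hsum i (Finset.mem_univ i)).symm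
  refine ⟨heq, ?_⟩
  rw [trace_eq_sum_of_isInternal_eigenspace f
    (isInternal_eigenspace_of_finrank_le f hμ (hsum ▸ hV))]
  simp only [heq]

end Module.End

theorem Real.tan_mul_cot {x : ℝ} (hs : sin x ≠ 0) (hc : cos x ≠ 0) : tan x * cot x = 1 := by
  rw [tan_eq_sin_div_cos, cot_eq_cos_div_sin]
  field_simp

theorem Real.cot_sub_tan {x : ℝ} (hs : sin x ≠ 0) (hc : cos x ≠ 0) :
    cot x - tan x = 2 * cot (2 * x) := by
  rw [cot_eq_cos_div_sin, tan_eq_sin_div_cos, cot_eq_cos_div_sin, sin_two_mul, cos_two_mul']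
  field_simp

namespace PinkallThorbergsson

variable {l : ℕ}

local notation "𝔼" => EuclideanSpace ℝ (Fin l ⊕ Fin l)
local notation "Mat" => Matrix (Fin l ⊕ Fin l) (Fin l ⊕ Fin l) ℝ

theorem matLin_mul (A B : Mat) (x : 𝔼) : matLin (A * B) x = matLin A (matLin B x) := by
  simp [matLin]

theorem matLin_one : matLin (1 : Mat) = LinearMap.id := by
  ext
  simp [matLin]

theorem matLin_add (A B : Mat) : matLin (A + B) = matLin A + matLin B :=
  map_add Matrix.toEuclideanLin A B

theorem matLin_smul (c : ℝ) (A : Mat) : matLin (c • A) = c • matLin A :=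
  map_smul Matrix.toEuclideanLin c A

theorem matLin_neg (A : Mat) : matLin (-A) = -matLin A :=
  map_neg Matrix.toEuclideanLin A

theorem inner_matLin_left (A : Mat) (x y : 𝔼) :
    inner ℝ (matLin A x) y = inner ℝ x (matLin Aᵀ y) := by
  change inner ℝ (Matrix.toEuclideanLin A x) y = inner ℝ x (Matrix.toEuclideanLin Aᵀ y)
  rw [← Matrix.conjTranspose_eq_transpose_of_trivial,
    Matrix.toEuclideanLin_conjTranspose_eq_adjoint, LinearMap.adjoint_inner_right]

theorem inner_matLin_of_isSymm {A : Mat} (hA : A.IsSymm) (x y : 𝔼) :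
    inner ℝ (matLin A x) y = inner ℝ x (matLin A y) := by
  rw [inner_matLin_left, hA.eq]

theorem inner_matLin_self_eq_zero {A : Mat} (hA : Aᵀ = -A) (x : 𝔼) :
    inner ℝ x (matLin A x) = 0 := by
  have h := inner_matLin_left A x x
  rw [hA, matLin_neg, LinearMap.neg_apply, inner_neg_right, real_inner_comm] at h
  linarith

def blockScalar (a b : ℝ) : Mat := Matrix.fromBlocks (a • 1) 0 0 (b • 1)

theorem ptQzero_eq_blockScalar (t : ℝ) : ptQzero l t = blockScalar (tan t) (-cot t) := by
  rw [ptQzero, blockScalar, neg_smul]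

theorem blockScalar_one_neg_one : blockScalar 1 (-1) = (Matrix.fromBlocks 1 0 0 (-1) : Mat) := by
  simp [blockScalar]

theorem blockScalar_mul (a b a' b' : ℝ) :
    blockScalar a b * blockScalar a' b' = (blockScalar (a * a') (b * b') : Mat) := by
  simp [blockScalar, Matrix.fromBlocks_multiply, smul_smul, mul_comm]

theorem blockScalar_add (a b a' b' : ℝ) :
    blockScalar a b + blockScalar a' b' = (blockScalar (a + a') (b + b') : Mat) := by
  simp [blockScalar, Matrix.fromBlocks_add, add_smul]

theorem smul_blockScalar (c a b : ℝ) :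
    c • blockScalar a b = (blockScalar (c * a) (c * b) : Mat) := by
  simp [blockScalar, Matrix.fromBlocks_smul, smul_smul]

theorem blockScalar_self (a : ℝ) : blockScalar a a = a • (1 : Mat) := by
  simp [blockScalar, ← Matrix.fromBlocks_one, Matrix.fromBlocks_smul]

theorem transpose_blockScalar (a b : ℝ) : (blockScalar a b : Mat)ᵀ = blockScalar a b := by
  simp [blockScalar, Matrix.fromBlocks_transpose]

theorem blockScalar_eq_add_smul (a b : ℝ) :
    blockScalar a b = ((a + b) / 2) • (1 : Mat) + ((a - b) / 2) • blockScalar 1 (-1) := by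
  rw [← blockScalar_self, smul_blockScalar, blockScalar_add]
  congr 1 <;> ring

theorem mul_blockScalar_of_anticomm {M : Mat}
    (hM : M * blockScalar 1 (-1) = -(blockScalar 1 (-1) * M)) (a b : ℝ) :
    M * blockScalar a b = blockScalar b a * M := by
  rw [blockScalar_eq_add_smul a b, blockScalar_eq_add_smul b a]
  simp only [Matrix.mul_add, Matrix.add_mul, Matrix.mul_smul, Matrix.smul_mul, Matrix.mul_one,
    Matrix.one_mul, hM]
  module

theorem matLin_blockScalar_ne_zero {a b : ℝ} (hab : a * b = -1) {x : 𝔼} (hx : x ≠ 0) :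
    matLin (blockScalar a b) x ≠ 0 := by
  intro h
  have hinv : blockScalar b a * blockScalar a b = -(1 : Mat) := by
    rw [blockScalar_mul, mul_comm b a, hab, blockScalar_self, neg_one_smul]
  have hx' : x = -matLin (blockScalar b a) (matLin (blockScalar a b) x) := by
    rw [← matLin_mul, hinv, matLin_neg, matLin_one]
    simp
  exact hx (by rw [hx', h, map_zero, neg_zero])

theorem matLin_blockScalar_single_inl (a b : ℝ) (j : Fin l) :
    matLin (blockScalar a b) (EuclideanSpace.single (Sum.inl j) 1 : 𝔼) =
      a • EuclideanSpace.single (Sum.inl j) 1 := by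
  ext (i | i) <;> simp [matLin, blockScalar, Matrix.one_apply]

theorem matLin_blockScalar_single_inr (a b : ℝ) (j : Fin l) :
    matLin (blockScalar a b) (EuclideanSpace.single (Sum.inr j) 1 : 𝔼) =
      b • EuclideanSpace.single (Sum.inr j) 1 := by
  ext (i | i) <;> simp [matLin, blockScalar, Matrix.one_apply]

theorem le_finrank_eigenspace_blockScalar_left (a b : ℝ) :
    l ≤ finrank ℝ (Module.End.eigenspace (matLin (blockScalar a b : Mat)) a) := by
  simpa using Module.End.card_le_finrank_eigenspace
    (EuclideanSpace.orthonormal_single.linearIndependent.comp Sum.inl Sum.inl_injective)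
    (matLin_blockScalar_single_inl a b)

theorem le_finrank_eigenspace_blockScalar_right (a b : ℝ) :
    l ≤ finrank ℝ (Module.End.eigenspace (matLin (blockScalar a b : Mat)) b) := by
  simpa using Module.End.card_le_finrank_eigenspace
    (EuclideanSpace.orthonormal_single.linearIndependent.comp Sum.inr Sum.inr_injective)
    (matLin_blockScalar_single_inr a b)

section Clifford

variable {ι : Type*} [DecidableEq ι]

structure IsCliffordSystem (P : ι → Mat) : Prop where
  isSymm : ∀ α, (P α).IsSymm
  mul_add_mul : ∀ α β, P α * P β + P β * P α = if α = β then (2 : ℝ) • (1 : Mat) else 0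

namespace IsCliffordSystem

theorem mul_self {P : ι → Mat} (hP : IsCliffordSystem P) (α : ι) : P α * P α = 1 := by
  have h := hP.mul_add_mul α α
  rw [if_pos rfl, ← two_smul ℝ] at h
  exact smul_right_injective _ two_ne_zero h

theorem anticomm {P : ι → Mat} (hP : IsCliffordSystem P) {α β : ι} (h : α ≠ β) :
    P α * P β = -(P β * P α) :=
  eq_neg_of_add_eq_zero_left (by rw [hP.mul_add_mul, if_neg h])

theorem matLin_ne_zero {P : ι → Mat} (hP : IsCliffordSystem P) (α : ι) {x : 𝔼} (hx : x ≠ 0) :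
    matLin (P α) x ≠ 0 := by
  intro h
  apply hx
  rw [← LinearMap.id_apply (R := ℝ) x, ← matLin_one, ← hP.mul_self α, matLin_mul, h, map_zero]

theorem inner_matLin_eq_zero {P : ι → Mat} (hP : IsCliffordSystem P) {α β : ι} (h : α ≠ β)
    (x : 𝔼) : inner ℝ (matLin (P α) x) (matLin (P β) x) = 0 := by
  rw [inner_matLin_of_isSymm (hP.isSymm α), ← matLin_mul]
  apply inner_matLin_self_eq_zero
  rw [Matrix.transpose_mul, (hP.isSymm α).eq, (hP.isSymm β).eq, hP.anticomm h.symm]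

theorem linearIndependent_matLin {P : ι → Mat} (hP : IsCliffordSystem P) {x : 𝔼}
    (hx : x ≠ 0) : LinearIndependent ℝ fun α => matLin (P α) x :=
  linearIndependent_of_ne_zero_of_inner_eq_zero (fun α => hP.matLin_ne_zero α hx)
    fun _ _ h => hP.inner_matLin_eq_zero h x

end IsCliffordSystem

end Clifford

theorem shapeOp_apply_of_matLin_eq_smul {T : Submodule ℝ 𝔼} {A : Mat} {x : T} {μ : ℝ}
    (h : matLin A x = μ • (x : 𝔼)) : shapeOp T A x = (-μ) • x := by
  simp only [shapeOp, LinearMap.neg_apply, LinearMap.comp_apply, Submodule.subtype_apply, h,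
    map_smul, ContinuousLinearMap.coe_coe,
    Submodule.orthogonalProjectionOnto_mem_subspace_eq_self, neg_smul]

theorem shapeOp_apply_eq_zero {T : Submodule ℝ 𝔼} {A : Mat} {x : T} (h : matLin A x ∈ Tᗮ) :
    shapeOp T A x = 0 := by
  simp only [shapeOp, LinearMap.neg_apply, LinearMap.comp_apply, Submodule.subtype_apply,
    ContinuousLinearMap.coe_coe, Submodule.orthogonalProjectionOnto_apply_of_mem_orthogonal h,
    neg_zero]

section Tangent

variable {m : ℕ}

theorem mem_ptTangent_iff {Q : Fin (m + 1) → Mat} {z x : 𝔼} :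
    x ∈ ptTangent Q z ↔ inner ℝ z x = 0 ∧ ∀ α, inner ℝ (matLin (Q α) z) x = 0 := by
  simp [ptTangent, Submodule.mem_orthogonal_span_iff]

theorem matLin_mem_orthogonal_ptTangent (Q : Fin (m + 1) → Mat) (z : 𝔼) (α : Fin (m + 1)) :
    matLin (Q α) z ∈ (ptTangent Q z)ᗮ :=
  Submodule.le_orthogonal_orthogonal _ (Submodule.subset_span (Set.mem_insert_of_mem _ ⟨α, rfl⟩))

theorem le_finrank_eigenspace_shapeOp {Q : Fin (m + 1) → Mat} (hQ0 : (Q 0).IsSymm)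
    (z : 𝔼) {μ : ℝ} (hμ : l ≤ finrank ℝ (Module.End.eigenspace (matLin (Q 0)) μ)) :
    l - (m + 1) ≤ finrank ℝ (Module.End.eigenspace (shapeOp (ptTangent Q z) (Q 0)) (-μ)) := by
  -- A `μ`-eigenvector of `Q₀` orthogonal to `z` is automatically orthogonal to `Q₀ z`,
  -- so only the `m + 1` conditions `⟂ z, Q₁z, …, Q_mz` cut down the eigenspace.
  set U := Submodule.span ℝ (Set.range (Fin.cons z fun β : Fin m => matLin (Q β.succ) z))
  have hzU : z ∈ U := Submodule.subset_span ⟨0, rfl⟩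
  have hQU (β : Fin m) : matLin (Q β.succ) z ∈ U := Submodule.subset_span ⟨β.succ, rfl⟩
  set W := Module.End.eigenspace (matLin (Q 0)) μ ⊓ Uᗮ
  have hWT : W ≤ ptTangent Q z := by
    rintro x ⟨hxμ, hxU⟩
    have hxz : inner ℝ z x = 0 := Submodule.inner_right_of_mem_orthogonal hzU hxU
    refine mem_ptTangent_iff.2 ⟨hxz, Fin.cases ?_ fun β => ?_⟩
    · rw [inner_matLin_of_isSymm hQ0, Module.End.mem_eigenspace_iff.1 hxμ, inner_smul_right,
        hxz, mul_zero]
    · exact Submodule.inner_right_of_mem_orthogonal (hQU β) hxU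
  have hW : l - (m + 1) ≤ finrank ℝ W := by
    have hU : finrank ℝ U ≤ m + 1 := (finrank_range_le_card _).trans_eq (Fintype.card_fin _)
    have hsum : finrank ℝ (Module.End.eigenspace (matLin (Q 0)) μ ⊔ Uᗮ : Submodule ℝ 𝔼) +
        finrank ℝ W = _ := Submodule.finrank_sup_add_finrank_inf_eq _ _
    have hsup := Submodule.finrank_le (Module.End.eigenspace (matLin (Q 0)) μ ⊔ Uᗮ)
    have hperp := U.finrank_add_finrank_orthogonal
    simp only [finrank_euclideanSpace, Fintype.card_sum, Fintype.card_fin] at hsup hperp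
    omega
  refine hW.trans (Module.End.finrank_le_finrank_eigenspace _ hWT fun x hx => ?_)
  exact shapeOp_apply_of_matLin_eq_smul (Module.End.mem_eigenspace_iff.1 hx.1)

end Tangent

section Spectrum

variable {m : ℕ}

theorem mul_blockScalar {P : Fin (m + 1) → Mat} (hP : IsCliffordSystem P)
    (hP0 : P 0 = blockScalar 1 (-1)) {α : Fin (m + 1)} (hα : α ≠ 0) (a b : ℝ) :
    P α * blockScalar a b = blockScalar b a * P α :=
  mul_blockScalar_of_anticomm (hP0 ▸ hP.anticomm hα) a b

theorem blockScalar_mul_mul_self {P : Fin (m + 1) → Mat} (hP : IsCliffordSystem P)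
    (hP0 : P 0 = blockScalar 1 (-1)) {α : Fin (m + 1)} (hα : α ≠ 0) {a b : ℝ}
    (hab : a * b = -1) : blockScalar a b * P α * blockScalar a b = -P α := by
  rw [Matrix.mul_assoc, mul_blockScalar hP hP0 hα, ← Matrix.mul_assoc, blockScalar_mul,
    mul_comm b a, hab, blockScalar_self, Matrix.smul_mul, Matrix.one_mul, neg_one_smul]

theorem blockScalar_mul_mul_comm {P : Fin (m + 1) → Mat} (hP : IsCliffordSystem P)
    (hP0 : P 0 = blockScalar 1 (-1)) {α β : Fin (m + 1)} (hα : α ≠ 0) (hβ : β ≠ 0) (a b : ℝ) :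
    blockScalar a b * (P α * P β) = P α * P β * blockScalar a b := by
  rw [← Matrix.mul_assoc, ← mul_blockScalar hP hP0 hα, Matrix.mul_assoc,
    ← mul_blockScalar hP hP0 hβ, ← Matrix.mul_assoc]

theorem inner_matLin_blockScalar_matLin {P : Fin (m + 1) → Mat} (hP : IsCliffordSystem P)
    (hP0 : P 0 = blockScalar 1 (-1)) {α : Fin (m + 1)} (hα : α ≠ 0) (a b : ℝ) {z : 𝔼}
    (hz : inner ℝ z (matLin (P α) z) = 0) :
    inner ℝ (matLin (blockScalar a b) z) (matLin (P α) z) = 0 := by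
  have hsum : blockScalar a b * P α + P α * blockScalar a b = (a + b) • P α := by
    rw [mul_blockScalar hP hP0 hα, ← Matrix.add_mul, blockScalar_add, add_comm b,
      blockScalar_self, Matrix.smul_mul, Matrix.one_mul]
  have h1 : inner ℝ (matLin (blockScalar a b) z) (matLin (P α) z) =
      inner ℝ z (matLin (blockScalar a b * P α) z) := by
    rw [inner_matLin_of_isSymm (transpose_blockScalar a b), matLin_mul]
  have h2 : inner ℝ (matLin (blockScalar a b) z) (matLin (P α) z) =
      inner ℝ z (matLin (P α * blockScalar a b) z) := by
    rw [real_inner_comm, inner_matLin_of_isSymm (hP.isSymm α), matLin_mul]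
  have h3 : inner ℝ z (matLin (blockScalar a b * P α) z) +
      inner ℝ z (matLin (P α * blockScalar a b) z) = 0 := by
    rw [← inner_add_right, ← LinearMap.add_apply, ← matLin_add, hsum, matLin_smul,
      LinearMap.smul_apply, inner_smul_right, hz, mul_zero]
  linarith

theorem finrank_ptTangent_add {P : Fin (m + 1) → Mat} (hP : IsCliffordSystem P)
    (hP0 : P 0 = blockScalar 1 (-1)) {a b : ℝ} (hab : a * b = -1) {z : 𝔼} (hz : z ≠ 0)
    (hM : ∀ α, inner ℝ z (matLin (Function.update P 0 (blockScalar a b) α) z) = 0) :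
    finrank ℝ (ptTangent (Function.update P 0 (blockScalar a b)) z) + (m + 2) = 2 * l := by
  rw [ptTangent]
  set v : Fin (m + 1) → 𝔼 := fun α => matLin (Function.update P 0 (blockScalar a b) α) z
  have hv : v = Fin.cons (matLin (blockScalar a b) z) fun β : Fin m => matLin (P β.succ) z := by
    ext1 α
    cases α using Fin.cases <;> simp [v]
  have hPz : LinearIndependent ℝ fun β : Fin m => matLin (P β.succ) z :=
    (hP.linearIndependent_matLin hz).comp _ (Fin.succ_injective _)
  have hBP (β : Fin m) : inner ℝ (matLin (blockScalar a b) z) (matLin (P β.succ) z) = 0 := by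
    refine inner_matLin_blockScalar_matLin hP hP0 (Fin.succ_ne_zero β) a b ?_
    simpa [Function.update_of_ne (Fin.succ_ne_zero β)] using hM β.succ
  have hN : LinearIndependent ℝ (Fin.cons z v : Fin (m + 2) → 𝔼) := by
    refine linearIndependent_finCons_of_inner_eq_zero ?_ hz hM
    rw [hv]
    exact linearIndependent_finCons_of_inner_eq_zero hPz (matLin_blockScalar_ne_zero hab hz) hBP
  have h := (Submodule.span ℝ (Set.range (Fin.cons z v : Fin (m + 2) → 𝔼)))
    |>.finrank_add_finrank_orthogonal
  rw [finrank_span_eq_card hN, Fin.range_cons] at h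
  simp only [finrank_euclideanSpace, Fintype.card_sum, Fintype.card_fin] at h
  omega

theorem matLin_mem_ptTangent {P : Fin (m + 1) → Mat} (hP : IsCliffordSystem P)
    (hP0 : P 0 = blockScalar 1 (-1)) {a b : ℝ} (hab : a * b = -1) {z : 𝔼}
    (hM : ∀ α, inner ℝ z (matLin (Function.update P 0 (blockScalar a b) α) z) = 0)
    {β : Fin (m + 1)} (hβ : β ≠ 0) :
    matLin (P β) (matLin (blockScalar a b) z) ∈
      ptTangent (Function.update P 0 (blockScalar a b)) z := by
  have hMP {γ : Fin (m + 1)} (hγ : γ ≠ 0) : inner ℝ z (matLin (P γ) z) = 0 := by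
    simpa [Function.update_of_ne hγ] using hM γ
  refine mem_ptTangent_iff.2 ⟨?_, fun γ => ?_⟩
  · rw [← inner_matLin_of_isSymm (hP.isSymm β), real_inner_comm]
    exact inner_matLin_blockScalar_matLin hP hP0 hβ a b (hMP hβ)
  by_cases hγ0 : γ = 0
  · subst hγ0
    rw [Function.update_self, inner_matLin_of_isSymm (transpose_blockScalar a b), ← matLin_mul,
      ← matLin_mul, blockScalar_mul_mul_self hP hP0 hβ hab, matLin_neg, LinearMap.neg_apply,
      inner_neg_right, hMP hβ, neg_zero]
  rw [Function.update_of_ne hγ0, inner_matLin_of_isSymm (hP.isSymm γ), ← matLin_mul,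
    ← matLin_mul]
  by_cases hγβ : γ = β
  · subst hγβ
    rw [hP.mul_self, Matrix.one_mul, ← Function.update_self 0 (blockScalar a b) P]
    exact hM 0
  · apply inner_matLin_self_eq_zero
    rw [Matrix.transpose_mul, Matrix.transpose_mul, transpose_blockScalar, (hP.isSymm β).eq,
      (hP.isSymm γ).eq, Matrix.mul_assoc, blockScalar_mul_mul_comm hP hP0 hβ hγ0,
      hP.anticomm (Ne.symm hγβ), Matrix.neg_mul, Matrix.mul_assoc]

theorem le_finrank_ker_shapeOp {P : Fin (m + 1) → Mat} (hP : IsCliffordSystem P)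
    (hP0 : P 0 = blockScalar 1 (-1)) {a b : ℝ} (hab : a * b = -1) {z : 𝔼} (hz : z ≠ 0)
    (hM : ∀ α, inner ℝ z (matLin (Function.update P 0 (blockScalar a b) α) z) = 0) :
    m ≤ finrank ℝ (Module.End.eigenspace
      (shapeOp (ptTangent (Function.update P 0 (blockScalar a b)) z) (blockScalar a b)) 0) := by
  set T := ptTangent (Function.update P 0 (blockScalar a b)) z
  -- `P_β Q₀ z = -Q₀⁻¹ P_β z`, the kernel vectors `Q₀⁻¹ Q_β z` of the paper up to sign.
  set w : Fin m → 𝔼 := fun β => matLin (P β.succ) (matLin (blockScalar a b) z)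
  have hw : LinearIndependent ℝ w :=
    (hP.linearIndependent_matLin (matLin_blockScalar_ne_zero hab hz)).comp _
      (Fin.succ_injective _)
  have hwT : Submodule.span ℝ (Set.range w) ≤ T := by
    rw [Submodule.span_le]
    rintro _ ⟨β, rfl⟩
    exact matLin_mem_ptTangent hP hP0 hab hM (Fin.succ_ne_zero β)
  have hBw : Submodule.span ℝ (Set.range w) ≤ Tᗮ.comap (matLin (blockScalar a b)) := by
    rw [Submodule.span_le]
    rintro _ ⟨β, rfl⟩
    have h : matLin (blockScalar a b) (w β) =
        -matLin (Function.update P 0 (blockScalar a b) β.succ) z := by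
      rw [Function.update_of_ne (Fin.succ_ne_zero β), ← matLin_mul, ← matLin_mul,
        blockScalar_mul_mul_self hP hP0 (Fin.succ_ne_zero β) hab, matLin_neg,
        LinearMap.neg_apply]
    rw [SetLike.mem_coe, Submodule.mem_comap, h]
    exact Submodule.neg_mem _ (matLin_mem_orthogonal_ptTangent _ z β.succ)
  calc m = finrank ℝ (Submodule.span ℝ (Set.range w)) := by
        rw [finrank_span_eq_card hw, Fintype.card_fin]
    _ ≤ _ := Module.End.finrank_le_finrank_eigenspace _ hwT fun x hx => by
        rw [zero_smul]
        exact shapeOp_apply_eq_zero (hBw hx)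

theorem shapeOp_eigenspaces_and_trace (hl : m + 1 ≤ l) {P Q : Fin (m + 1) → Mat}
    (hP : IsCliffordSystem P) (hP0 : P 0 = blockScalar 1 (-1)) {a b : ℝ} (hab : a * b = -1)
    (hQ : Q = Function.update P 0 (blockScalar a b)) {z : 𝔼} (hz : z ≠ 0)
    (hM : ∀ α, inner ℝ z (matLin (Q α) z) = 0) :
    finrank ℝ (Module.End.eigenspace (shapeOp (ptTangent Q z) (Q 0)) (-b)) = l - m - 1 ∧
    finrank ℝ (Module.End.eigenspace (shapeOp (ptTangent Q z) (Q 0)) 0) = m ∧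
    finrank ℝ (Module.End.eigenspace (shapeOp (ptTangent Q z) (Q 0)) (-a)) = l - m - 1 ∧
    LinearMap.trace ℝ (ptTangent Q z) (shapeOp (ptTangent Q z) (Q 0)) =
      -(((l : ℝ) - m - 1) * (a + b)) := by
  have hQ0 : Q 0 = blockScalar a b := hQ ▸ Function.update_self ..
  have hsymm : (Q 0).IsSymm := hQ0 ▸ transpose_blockScalar a b
  have hnegb := le_finrank_eigenspace_shapeOp hsymm z
    (hQ0 ▸ le_finrank_eigenspace_blockScalar_right a b)
  have hnega := le_finrank_eigenspace_shapeOp hsymm z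
    (hQ0 ▸ le_finrank_eigenspace_blockScalar_left a b)
  subst hQ
  rw [hQ0] at hnegb hnega ⊢
  have hker := le_finrank_ker_shapeOp hP hP0 hab hz hM
  have hT := finrank_ptTangent_add hP hP0 hab hz hM
  have hμ : Function.Injective ![-b, 0, -a] := by
    have ha : a ≠ 0 := by rintro rfl; simp at hab
    have hb : b ≠ 0 := by rintro rfl; simp at hab
    have hba : b ≠ a := by rintro rfl; nlinarith [sq_nonneg b]
    intro i j h
    fin_cases i <;> fin_cases j <;> simp_all [eq_comm]
  obtain ⟨hdim, htr⟩ := Module.End.finrank_eigenspace_eq_and_trace_eq _ hμ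
    (n := ![l - m - 1, m, l - m - 1])
    (fun i => by
      fin_cases i
      exacts [(Nat.sub_sub l m 1).trans_le hnegb, hker, (Nat.sub_sub l m 1).trans_le hnega])
    (by simp [Fin.sum_univ_three]; omega)
  refine ⟨hdim 0, hdim 1, hdim 2, ?_⟩
  rw [htr, Fin.sum_univ_three]
  simp [Nat.cast_sub (by omega : m + 1 ≤ l), Nat.sub_sub]
  ring

end Spectrum

end PinkallThorbergsson

open PinkallThorbergsson

theorem statement8_general (l m : ℕ) (hl : m + 2 ≤ l) (t : ℝ) (ht0 : 0 < t) (ht : t ≤ π / 4)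
    (P : Fin (m + 1) → Matrix (Fin l ⊕ Fin l) (Fin l ⊕ Fin l) ℝ)
    (hSymm : ∀ α, (P α).IsSymm)
    (hCliff : ∀ α β, P α * P β + P β * P α =
      if α = β then (2 : ℝ) • (1 : Matrix (Fin l ⊕ Fin l) (Fin l ⊕ Fin l) ℝ) else 0)
    (hP0 : P 0 = Matrix.fromBlocks 1 0 0 (-1))
    (Q : Fin (m + 1) → Matrix (Fin l ⊕ Fin l) (Fin l ⊕ Fin l) ℝ)
    (hQ : Q = fun α => if α = 0 then ptQzero l t else P α)
    (z : EuclideanSpace ℝ (Fin l ⊕ Fin l))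
    (hzx : ∑ i, z (Sum.inl i) ^ 2 = Real.cos t ^ 2)
    (hM : ∀ α, inner ℝ z (matLin (Q α) z) = (0 : ℝ)) :
    Module.finrank ℝ
      (Module.End.eigenspace (shapeOp (ptTangent Q z) (Q 0)) (Real.cot t)) = l - m - 1 ∧
    Module.finrank ℝ
      (Module.End.eigenspace (shapeOp (ptTangent Q z) (Q 0)) 0) = m ∧
    Module.finrank ℝ
      (Module.End.eigenspace (shapeOp (ptTangent Q z) (Q 0)) (-Real.tan t)) = l - m - 1 ∧
    LinearMap.trace ℝ (ptTangent Q z) (shapeOp (ptTangent Q z) (Q 0)) =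
      ((l : ℝ) - m - 1) * (Real.cot t - Real.tan t) ∧
    LinearMap.trace ℝ (ptTangent Q z) (shapeOp (ptTangent Q z) (Q 0)) =
      2 * ((l : ℝ) - m - 1) * Real.cot (2 * t) := by
  have hsin : sin t ≠ 0 := (sin_pos_of_pos_of_lt_pi ht0 (by linarith [pi_pos])).ne'
  have hcos : cos t ≠ 0 := (cos_pos_of_mem_Ioo ⟨by linarith [pi_pos], by linarith [pi_pos]⟩).ne'
  have hz : z ≠ 0 := by
    rintro rfl
    exact hcos (by simpa using hzx.symm)
  have hQ' : Q = Function.update P 0 (blockScalar (tan t) (-cot t)) := by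
    rw [hQ, ← ptQzero_eq_blockScalar]
    ext1 α
    simp [Function.update_apply]
  obtain ⟨hcot, hker, htan, htr⟩ := shapeOp_eigenspaces_and_trace (by omega) ⟨hSymm, hCliff⟩
    (hP0.trans blockScalar_one_neg_one.symm) (by rw [mul_neg, tan_mul_cot hsin hcos]) hQ' hz hM
  rw [neg_neg] at hcot
  have htr' : LinearMap.trace ℝ (ptTangent Q z) (shapeOp (ptTangent Q z) (Q 0)) =
      ((l : ℝ) - m - 1) * (cot t - tan t) := by
    rw [htr]
    ring
  refine ⟨hcot, hker, htan, htr', ?_⟩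
  rw [htr', cot_sub_tan hsin hcos]
  ring

/-- in the Pinkall–Thorbergsson construction, for `z ∈ M₊ᵗ`, the shape
operator w.r.t. the unit normal `Q₀ z` has eigenvalues `cot t, 0, -tan t` with
multiplicities `l-m-1`, `m`, `l-m-1`; consequently its trace equals
`(l-m-1)(cot t - tan t) = 2(l-m-1) cot 2t`. -/
theorem statement8 (l m : ℕ) (hl : m + 2 ≤ l) (t : ℝ) (ht0 : 0 < t) (ht : t ≤ π / 4)
    (P : Fin (m + 1) → Matrix (Fin l ⊕ Fin l) (Fin l ⊕ Fin l) ℝ)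
    (hSymm : ∀ α, (P α).IsSymm)
    (hCliff : ∀ α β, P α * P β + P β * P α =
      if α = β then (2 : ℝ) • (1 : Matrix (Fin l ⊕ Fin l) (Fin l ⊕ Fin l) ℝ) else 0)
    (hP0 : P 0 = Matrix.fromBlocks 1 0 0 (-1))
    (Q : Fin (m + 1) → Matrix (Fin l ⊕ Fin l) (Fin l ⊕ Fin l) ℝ)
    (hQ : Q = fun α => if α = 0 then ptQzero l t else P α)
    (z : EuclideanSpace ℝ (Fin l ⊕ Fin l))
    (hzx : ∑ i, z (Sum.inl i) ^ 2 = Real.cos t ^ 2)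
    (hzy : ∑ i, z (Sum.inr i) ^ 2 = Real.sin t ^ 2)
    (hM : ∀ α, inner ℝ z (matLin (Q α) z) = (0 : ℝ)) :
    Module.finrank ℝ
      (Module.End.eigenspace (shapeOp (ptTangent Q z) (Q 0)) (Real.cot t)) = l - m - 1 ∧
    Module.finrank ℝ
      (Module.End.eigenspace (shapeOp (ptTangent Q z) (Q 0)) 0) = m ∧
    Module.finrank ℝ
      (Module.End.eigenspace (shapeOp (ptTangent Q z) (Q 0)) (-Real.tan t)) = l - m - 1 ∧
    LinearMap.trace ℝ (ptTangent Q z) (shapeOp (ptTangent Q z) (Q 0)) =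
      ((l : ℝ) - m - 1) * (Real.cot t - Real.tan t) ∧
    LinearMap.trace ℝ (ptTangent Q z) (shapeOp (ptTangent Q z) (Q 0)) =
      2 * ((l : ℝ) - m - 1) * Real.cot (2 * t) :=
  statement8_general l m hl t ht0 ht P hSymm hCliff hP0 Q hQ z hzx hM
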